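/- The single-layer Stokes velocity generated on the unit circle by a force proportional to ∂²_θX⋆ vanishes: for every θ ∈ ℝ, the function η ↦ G(X⋆(θ) − X⋆(η))·X⋆(η) is Lebesgue integrable on (−π,π) and ∫_{−π}^{π} G(X⋆(θ) − X⋆(η)) · X⋆''(η) dη = 0 ∈ ℝ², where X⋆''(η) = −X⋆(η). -/

import Mathlib

/-!
For a chord `x = X⋆ θ - X⋆ η` of the unit circle one has `2 x ⬝ X⋆ η = -|x|²`, so the
Stokeslet applied to `X⋆ η` collapses to `-(1/8π) (log |x|² • X⋆ η + x)`, where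
`|x|² = 2 - 2 cos (θ - η)`. After the substitution `u = θ - η` the velocity is governed by the
first Fourier coefficients of `log (2 - 2 cos u)` over a period: the sine coefficient vanishes by
symmetry, and the cosine coefficient is `-2π`, read off from the antiderivative
`sin u log (2 - 2 cos u) - u - sin u`, which is continuous through the zeros of `2 - 2 cos u`
because `s log s → 0`. This `-2π X⋆ θ` cancels exactly the `2π X⋆ θ` coming from the chord
term, since `X⋆` has mean zero.
-/

open Real intervalIntegral

/-- The 2D Stokeslet as a matrix-valued function of `x ∈ ℝ²`:
`G(x) = (1/(4π))(−log|x|·I + (x⊗x)/|x|²)`. -/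
noncomputable def stokeslet (x : Fin 2 → ℝ) : Matrix (Fin 2) (Fin 2) ℝ :=
  Matrix.of fun i j =>
    (1 / (4 * π)) *
      (-(Real.log (Real.sqrt (x 0 ^ 2 + x 1 ^ 2))) * (if i = j then 1 else 0) +
        x i * x j / (x 0 ^ 2 + x 1 ^ 2))

/-- The counterclockwise unit-circle parametrization `X⋆(θ) = (cos θ, sin θ)`. -/
noncomputable def Xstar (θ : ℝ) : Fin 2 → ℝ := ![Real.cos θ, Real.sin θ]

open MeasureTheory (volume)

lemma two_sub_two_cos_eq_sq (u : ℝ) : 2 - 2 * cos u = (2 * sin (u / 2)) ^ 2 := by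
  have h : cos u = 2 * cos (u / 2) ^ 2 - 1 := by rw [← cos_two_mul]; ring_nf
  linear_combination -2 * h - 4 * sin_sq_add_cos_sq (u / 2)

-- Valid for every `u`: `Real.log` is even, so `log (s ^ 2) = 2 * log s` also for `s ≤ 0`.
lemma log_two_sub_two_cos (u : ℝ) : log (2 - 2 * cos u) = 2 * log (2 * sin (u / 2)) := by
  rw [two_sub_two_cos_eq_sq, log_pow, Nat.cast_ofNat]

lemma intervalIntegrable_log_two_sub_two_cos (a b : ℝ) :
    IntervalIntegrable (fun u => log (2 - 2 * cos u)) volume a b :=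
  (show AnalyticOnNhd ℝ (fun u => 2 - 2 * cos u) _ from fun _ _ => by fun_prop)
    |>.meromorphicOn.intervalIntegrable_log

lemma continuous_sin_mul_log_two_sub_two_cos :
    Continuous fun u => sin u * log (2 - 2 * cos u) := by
  have h (u : ℝ) : sin u * log (2 - 2 * cos u)
      = 2 * cos (u / 2) * ((2 * sin (u / 2)) * log (2 * sin (u / 2))) := by
    have hs : sin u = 2 * sin (u / 2) * cos (u / 2) := by rw [← sin_two_mul]; ring_nf
    rw [hs, log_two_sub_two_cos]
    ring
  simp_rw [h]
  exact (by fun_prop : Continuous fun u => 2 * cos (u / 2)).mul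
    (continuous_mul_log.comp (by fun_prop : Continuous fun u => 2 * sin (u / 2)))

lemma hasDerivAt_sin_mul_log_two_sub_two_cos {u : ℝ} (hu : cos u ≠ 1) :
    HasDerivAt (fun u => sin u * log (2 - 2 * cos u))
      (cos u * log (2 - 2 * cos u) + (1 + cos u)) u := by
  have hpos : 2 - 2 * cos u ≠ 0 := by contrapose! hu; linarith
  refine ((hasDerivAt_sin u).mul
    (((hasDerivAt_cos u).const_mul 2).const_sub 2 |>.log hpos)).congr_deriv ?_
  field_simp
  linear_combination sin_sq_add_cos_sq u

lemma integral_log_two_sub_two_cos_mul_cos :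
    ∫ u in (0)..(2 * π), log (2 - 2 * cos u) * cos u = -(2 * π) := by
  have hderiv : ∀ u ∈ Set.Ioo 0 (2 * π), HasDerivAt
      (fun u => sin u * log (2 - 2 * cos u) - (u + sin u)) (log (2 - 2 * cos u) * cos u) u := by
    intro u hu
    have hcos : cos u ≠ 1 := by
      rw [Ne, cos_eq_one_iff_of_lt_of_lt (by linarith [hu.1, pi_pos]) hu.2]
      exact hu.1.ne'
    refine ((hasDerivAt_sin_mul_log_two_sub_two_cos hcos).sub
      ((hasDerivAt_id u).add (hasDerivAt_sin u))).congr_deriv ?_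
    ring
  rw [integral_eq_sub_of_hasDerivAt_of_le (by positivity)
    (continuous_sin_mul_log_two_sub_two_cos.sub (by fun_prop)).continuousOn hderiv
    ((intervalIntegrable_log_two_sub_two_cos _ _).mul_continuousOn continuous_cos.continuousOn)]
  simp

lemma integral_log_two_sub_two_cos_mul_sin :
    ∫ u in (0)..(2 * π), log (2 - 2 * cos u) * sin u = 0 := by
  have h := integral_comp_sub_left (fun u => log (2 - 2 * cos u) * sin u)
    (a := 0) (b := 2 * π) (2 * π)
  simp only [cos_two_pi_sub, sin_two_pi_sub, mul_neg, integral_neg, sub_self, sub_zero] at h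
  linarith

-- For `x = 0` both sides vanish, thanks to `log 0 = 0` and `0 / 0 = 0`.
lemma stokeslet_mulVec_of_two_dotProduct_eq {x v : Fin 2 → ℝ}
    (h : 2 * (x ⬝ᵥ v) = -(x ⬝ᵥ x)) :
    (stokeslet x).mulVec v = -(1 / (8 * π)) • (log (x ⬝ᵥ x) • v + x) := by
  simp only [dotProduct, Fin.sum_univ_two, ← sq] at h ⊢
  have hS : 0 ≤ x 0 ^ 2 + x 1 ^ 2 := by positivity
  rcases hS.eq_or_lt with hS0 | hS0
  · have hx : x = 0 := by
      ext i; fin_cases i <;> simp <;> nlinarith [sq_nonneg (x 0), sq_nonneg (x 1)]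
    subst hx
    ext i; fin_cases i <;> simp [stokeslet, Matrix.mulVec, dotProduct]
  · ext i
    fin_cases i <;>
      simp [stokeslet, Matrix.mulVec, dotProduct, Fin.sum_univ_two, log_sqrt hS] <;> field_simp
    · linear_combination (8 * x 0) * h
    · linear_combination (8 * x 1) * h

lemma Xstar_sub_dotProduct_self (θ η : ℝ) :
    (Xstar θ - Xstar η) ⬝ᵥ (Xstar θ - Xstar η) = 2 - 2 * cos (θ - η) := by
  simp only [Xstar, dotProduct, Fin.sum_univ_two, Pi.sub_apply, Matrix.cons_val_zero,
    Matrix.cons_val_one, cos_sub]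
  linear_combination sin_sq_add_cos_sq θ + sin_sq_add_cos_sq η

lemma two_mul_Xstar_sub_dotProduct_Xstar (θ η : ℝ) :
    2 * ((Xstar θ - Xstar η) ⬝ᵥ Xstar η)
      = -((Xstar θ - Xstar η) ⬝ᵥ (Xstar θ - Xstar η)) := by
  simp only [Xstar, dotProduct, Fin.sum_univ_two, Pi.sub_apply, Matrix.cons_val_zero,
    Matrix.cons_val_one]
  linear_combination sin_sq_add_cos_sq θ - sin_sq_add_cos_sq η

lemma stokeslet_Xstar_sub_mulVec_Xstar (θ η : ℝ) :
    (stokeslet (Xstar θ - Xstar η)).mulVec (Xstar η)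
      = -(1 / (8 * π)) • (log (2 - 2 * cos (θ - η)) • Xstar η + (Xstar θ - Xstar η)) := by
  rw [stokeslet_mulVec_of_two_dotProduct_eq (two_mul_Xstar_sub_dotProduct_Xstar θ η),
    Xstar_sub_dotProduct_self]

lemma continuous_Xstar : Continuous Xstar := by
  unfold Xstar; fun_prop

lemma Xstar_periodic : Function.Periodic Xstar (2 * π) := fun θ => by
  simp [Xstar]

lemma Xstar_sub (θ u : ℝ) :
    Xstar (θ - u) = cos u • Xstar θ + sin u • Xstar (θ - π / 2) := by
  ext i; fin_cases i <;> simp [Xstar, cos_sub, sin_sub] <;> ring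

lemma integral_comp_sub_smul_Xstar {f : ℝ → ℝ} (hf : Function.Periodic f (2 * π))
    (hfi : IntervalIntegrable f volume 0 (2 * π)) (θ : ℝ) :
    ∫ η in (-π)..π, f (θ - η) • Xstar η
      = (∫ u in (0)..(2 * π), f u * cos u) • Xstar θ
        + (∫ u in (0)..(2 * π), f u * sin u) • Xstar (θ - π / 2) := by
  set g := fun u => f u • Xstar (θ - u)
  have hg : Function.Periodic g (2 * π) := fun u => by
    simp only [g, hf u, sub_add_eq_sub_sub, Xstar_periodic.sub_eq]
  calc ∫ η in (-π)..π, f (θ - η) • Xstar η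
      = ∫ η in (-π)..π, g (θ - η) := by simp only [g, sub_sub_cancel]
    _ = ∫ u in (θ - π)..(θ - π + 2 * π), g u := by
      rw [integral_comp_sub_left]; ring_nf
    _ = ∫ u in (0)..(2 * π),
          (f u * cos u) • Xstar θ + (f u * sin u) • Xstar (θ - π / 2) := by
      rw [hg.intervalIntegral_add_eq (θ - π) 0, zero_add]
      congr 1; funext u
      rw [show g u = f u • Xstar (θ - u) from rfl, Xstar_sub θ u, smul_add, smul_smul,
        smul_smul]
    _ = _ := by
      rw [integral_add, intervalIntegral.integral_smul_const,
        intervalIntegral.integral_smul_const]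
      · exact (hfi.mul_continuousOn continuous_cos.continuousOn).smul_continuousOn
          continuousOn_const
      · exact (hfi.mul_continuousOn continuous_sin.continuousOn).smul_continuousOn
          continuousOn_const

lemma integral_Xstar : ∫ η in (-π)..π, Xstar η = 0 := by
  simpa using integral_comp_sub_smul_Xstar (f := fun _ => 1) (fun _ => rfl)
    intervalIntegrable_const 0

lemma integral_log_two_sub_two_cos_sub_smul_Xstar (θ : ℝ) :
    ∫ η in (-π)..π, log (2 - 2 * cos (θ - η)) • Xstar η = -(2 * π) • Xstar θ := by
  rw [integral_comp_sub_smul_Xstar (fun u => by simp)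
    (intervalIntegrable_log_two_sub_two_cos 0 (2 * π)), integral_log_two_sub_two_cos_mul_cos,
    integral_log_two_sub_two_cos_mul_sin, zero_smul, add_zero]

theorem singleLayer_circle_velocity_zero (θ : ℝ) :
    IntervalIntegrable (fun η => (stokeslet (Xstar θ - Xstar η)).mulVec (Xstar η))
        MeasureTheory.volume (-π) π ∧
    ∫ η in (-π)..π, (stokeslet (Xstar θ - Xstar η)).mulVec (-(Xstar η)) = 0 := by
  have hlog :
      IntervalIntegrable (fun η => log (2 - 2 * cos (θ - η)) • Xstar η) volume (-π) π := by
    refine IntervalIntegrable.smul_continuousOn ?_ continuous_Xstar.continuousOn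
    simpa using (intervalIntegrable_log_two_sub_two_cos (θ + π) (θ - π)).comp_sub_left θ
  have hchord : IntervalIntegrable (fun η => Xstar θ - Xstar η) volume (-π) π :=
    (continuous_const.sub continuous_Xstar).intervalIntegrable _ _
  simp only [Matrix.mulVec_neg, stokeslet_Xstar_sub_mulVec_Xstar]
  refine ⟨(hlog.add hchord).continuousOn_smul continuousOn_const, ?_⟩
  rw [integral_neg, intervalIntegral.integral_smul, integral_add hlog hchord,
    integral_log_two_sub_two_cos_sub_smul_Xstar, integral_sub intervalIntegrable_const
    (continuous_Xstar.intervalIntegrable _ _), integral_Xstar, integral_const]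
  module
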